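/- arXiv:1506.08131 — 2 statements merged into one kernel-verified Lean document; each statement's English description precedes it below -/
import Mathlib

section
/- For every n, the matrix exponential maps the set t_n(ℝ) of upper triangular n×n real matrices bijectively onto the set T_n^+(ℝ) of upper triangular n×n real matrices all of whose diagonal entries are positive. -/
/-!
Order the entries of an upper triangular matrix by superdiagonals. If `A` is upper triangular,
then on the `k`-th superdiagonal (`j = i + k`, `k ≥ 1`) the entry `(A ^ m) i j` is
`A i j * ∑ a < m, (A i i) ^ a * (A j j) ^ (m - 1 - a)` plus terms depending only on entries of `A`
below that superdiagonal. Summing against `1 / m!`, the geometric sums add up to the divided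
difference `d = dslope Real.exp (A i i) (A j j)` of `exp`, which never vanishes. So `exp A` is
upper triangular with diagonal `e^{A i i}`, and the entries of `A` can be recovered from those of
`exp A` one superdiagonal at a time (injectivity); any `M` with positive diagonal is reached the
same way, starting from `A i i = log (M i i)` (surjectivity).
-/

open Matrix NormedSpace Finset Nat

theorem Real.hasSum_dslope_exp (x y : ℝ) :
    HasSum (fun m => (m ! : ℝ)⁻¹ * ∑ a ∈ range m, x ^ a * y ^ (m - 1 - a))
      (dslope Real.exp x y) := by
  have hexp (z : ℝ) : HasSum (fun m => z ^ m / m !) (Real.exp z) := by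
    rw [Real.exp_eq_exp_ℝ]; exact expSeries_div_hasSum_exp z
  rcases eq_or_ne y x with rfl | hxy
  · rw [dslope_same, Real.deriv_exp]
    have hterm (m : ℕ) : ((m + 1)! : ℝ)⁻¹ * ∑ a ∈ range (m + 1), y ^ a * y ^ (m + 1 - 1 - a) =
        y ^ m / m ! := by
      rw [geom_sum₂_self, factorial_succ, add_tsub_cancel_right]
      push_cast
      field_simp
    refine (hasSum_nat_add_iff' 1).mp ?_
    simpa only [hterm, sum_range_one, range_zero, sum_empty, mul_zero, sub_zero] using hexp y
  · have hyx : y - x ≠ 0 := sub_ne_zero.2 hxy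
    have hterm (m : ℕ) : (m ! : ℝ)⁻¹ * ∑ a ∈ range m, x ^ a * y ^ (m - 1 - a) =
        (y ^ m / (m ! : ℝ) - x ^ m / (m ! : ℝ)) / (y - x) := by
      field_simp
      linear_combination -geom_sum₂_mul x y m
    rw [dslope_of_ne _ hxy, slope_def_field]
    simpa only [hterm] using ((hexp y).sub (hexp x)).div_const (y - x)

theorem Real.dslope_exp_ne_zero (x y : ℝ) : dslope Real.exp x y ≠ 0 := by
  rcases eq_or_ne y x with rfl | hxy
  · rw [dslope_same, Real.deriv_exp]
    exact (Real.exp_pos y).ne'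
  · rw [dslope_of_ne _ hxy, slope_def_field]
    exact div_ne_zero (sub_ne_zero.2 (Real.exp_injective.ne hxy)) (sub_ne_zero.2 hxy)

namespace Matrix

section Triangular

variable {ι R : Type*} [LinearOrder ι] [Fintype ι] [LocallyFiniteOrder ι] {A B : Matrix ι ι R}

theorem BlockTriangular.mul_apply_eq_sum_Icc [NonUnitalNonAssocSemiring R]
    (hA : A.BlockTriangular id) (hB : B.BlockTriangular id) (i j : ι) :
    (A * B) i j = ∑ l ∈ Icc i j, A i l * B l j := by
  rw [mul_apply]
  refine (sum_subset (subset_univ _) fun l _ hl => ?_).symm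
  rcases not_and_or.mp (mem_Icc.not.mp hl) with h | h
  · rw [hA (not_le.mp h), zero_mul]
  · rw [hB (not_le.mp h), mul_zero]

theorem BlockTriangular.mul_apply_of_lt [NonUnitalNonAssocSemiring R]
    (hA : A.BlockTriangular id) (hB : B.BlockTriangular id) {i j : ι} (hij : i < j) :
    (A * B) i j = A i i * B i j + A i j * B j j + ∑ l ∈ Ioo i j, A i l * B l j := by
  rw [hA.mul_apply_eq_sum_Icc hB, Icc_eq_cons_Ioc hij.le, sum_cons, Ioc_eq_cons_Ioo hij, sum_cons,
    add_assoc]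

variable [DecidableEq ι]

theorem BlockTriangular.pow_apply_self [Semiring R] (hA : A.BlockTriangular id) (m : ℕ) (i : ι) :
    (A ^ m) i i = A i i ^ m := by
  induction m with
  | zero => simp
  | succ m ih => rw [pow_succ, (hA.pow m).mul_apply_eq_sum_Icc hA, Icc_self, sum_singleton, ih,
      pow_succ]

theorem BlockTriangular.pow_succ_apply_sub [CommRing R] (hA : A.BlockTriangular id) {i j : ι}
    (hij : i < j) (m : ℕ) :
    (A ^ (m + 1)) i j - A i j * ∑ a ∈ range (m + 1), A i i ^ a * A j j ^ (m - a) =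
      A j j * ((A ^ m) i j - A i j * ∑ a ∈ range m, A i i ^ a * A j j ^ (m - 1 - a)) +
        ∑ l ∈ Ioo i j, (A ^ m) i l * A l j := by
  rw [pow_succ, (hA.pow m).mul_apply_of_lt hA hij, hA.pow_apply_self, geom_sum₂_succ_eq]
  ring

end Triangular

section Superdiagonals

variable {n : ℕ} {R : Type*} {k : ℕ} {A B C : Matrix (Fin n) (Fin n) R}

def EqBelowSuperdiag (k : ℕ) (A B : Matrix (Fin n) (Fin n) R) : Prop :=
  ∀ p q : Fin n, (q : ℕ) < p + k → A p q = B p q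

theorem eqBelowSuperdiag_zero [Zero R] (hA : A.BlockTriangular id) (hB : B.BlockTriangular id) :
    EqBelowSuperdiag 0 A B := fun p q hpq => by
  rw [hA (show q < p by omega), hB (show q < p by omega)]

namespace EqBelowSuperdiag

theorem trans (h₁ : EqBelowSuperdiag k A B) (h₂ : EqBelowSuperdiag k B C) :
    EqBelowSuperdiag k A C :=
  fun p q hpq => (h₁ p q hpq).trans (h₂ p q hpq)

theorem eq (h : EqBelowSuperdiag k A B) (hk : n ≤ k) : A = B :=
  ext fun p q => h p q (by omega)

theorem apply_self (h : EqBelowSuperdiag k A B) (hk : 0 < k) (i : Fin n) : A i i = B i i :=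
  h i i (by omega)

theorem succ (h : EqBelowSuperdiag k A B) (hk : ∀ i j : Fin n, (j : ℕ) = i + k → A i j = B i j) :
    EqBelowSuperdiag (k + 1) A B := fun p q hpq =>
  (Nat.lt_succ_iff_lt_or_eq.mp (by omega)).elim (h p q) (hk p q)

theorem pow [Semiring R] (hA : A.BlockTriangular id) (hB : B.BlockTriangular id)
    (h : EqBelowSuperdiag k A B) (m : ℕ) : EqBelowSuperdiag k (A ^ m) (B ^ m) := by
  induction m with
  | zero => exact fun _ _ _ => rfl
  | succ m ih =>
    intro p q hpq
    rw [pow_succ, pow_succ, (hA.pow m).mul_apply_eq_sum_Icc hA,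
      (hB.pow m).mul_apply_eq_sum_Icc hB]
    refine sum_congr rfl fun l hl => ?_
    obtain ⟨hpl, hlq⟩ := mem_Icc.mp hl
    rw [ih p l (by omega), h l q (by omega)]

theorem pow_apply_sub_eq [CommRing R] (hA : A.BlockTriangular id) (hB : B.BlockTriangular id)
    (h : EqBelowSuperdiag k A B) (hk : 0 < k) {i j : Fin n} (hij : (j : ℕ) = i + k) (m : ℕ) :
    (A ^ m) i j - A i j * ∑ a ∈ range m, A i i ^ a * A j j ^ (m - 1 - a) =
      (B ^ m) i j - B i j * ∑ a ∈ range m, B i i ^ a * B j j ^ (m - 1 - a) := by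
  have hlt : i < j := by omega
  induction m with
  | zero => simp [one_apply_ne hlt.ne]
  | succ m ih =>
    simp only [add_tsub_cancel_right]
    rw [hA.pow_succ_apply_sub hlt, hB.pow_succ_apply_sub hlt, ih, h.apply_self hk j]
    congr 1
    refine sum_congr rfl fun l hl => ?_
    obtain ⟨hil, hlj⟩ := mem_Ioo.mp hl
    rw [h.pow hA hB m i l (by omega), h l j (by omega)]

end EqBelowSuperdiag

end Superdiagonals

section Exponential

open scoped Norms.Operator in
theorem hasSum_exp_apply {ι : Type*} [Fintype ι] [DecidableEq ι] (A : Matrix ι ι ℝ) (i j : ι) :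
    HasSum (fun m => (m ! : ℝ)⁻¹ * (A ^ m) i j) (exp A i j) :=
  Pi.hasSum.mp (Pi.hasSum.mp (exp_series_hasSum_exp' (𝕂 := ℝ) A) i) j

theorem BlockTriangular.exp_apply_self {ι : Type*} [LinearOrder ι] [Fintype ι]
    [LocallyFiniteOrder ι] [DecidableEq ι] {A : Matrix ι ι ℝ} (hA : A.BlockTriangular id) (i : ι) :
    NormedSpace.exp A i i = Real.exp (A i i) := by
  refine (hasSum_exp_apply A i i).unique ?_
  simpa only [hA.pow_apply_self, inv_mul_eq_div, Real.exp_eq_exp_ℝ]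
    using expSeries_div_hasSum_exp (A i i)

namespace EqBelowSuperdiag

variable {n k : ℕ} {A B : Matrix (Fin n) (Fin n) ℝ}

theorem exp (hA : A.BlockTriangular id) (hB : B.BlockTriangular id)
    (h : EqBelowSuperdiag k A B) : EqBelowSuperdiag k (NormedSpace.exp A) (NormedSpace.exp B) :=
  fun p q hpq => (hasSum_exp_apply A p q).unique <| by
    simpa only [(h.pow hA hB · p q hpq)] using hasSum_exp_apply B p q

theorem exp_apply_sub_eq (hA : A.BlockTriangular id) (hB : B.BlockTriangular id)
    (h : EqBelowSuperdiag k A B) (hk : 0 < k) {i j : Fin n} (hij : (j : ℕ) = i + k) :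
    NormedSpace.exp A i j - A i j * dslope Real.exp (A i i) (A j j) =
      NormedSpace.exp B i j - B i j * dslope Real.exp (B i i) (B j j) := by
  have hseries (C : Matrix (Fin n) (Fin n) ℝ) :
      HasSum (fun m => (m ! : ℝ)⁻¹ *
          ((C ^ m) i j - C i j * ∑ a ∈ range m, C i i ^ a * C j j ^ (m - 1 - a)))
        (NormedSpace.exp C i j - C i j * dslope Real.exp (C i i) (C j j)) := by
    simpa only [mul_sub, mul_left_comm]
      using (hasSum_exp_apply C i j).sub ((Real.hasSum_dslope_exp _ _).mul_left (C i j))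
  exact (hseries A).unique (by simpa only [h.pow_apply_sub_eq hA hB hk hij] using hseries B)

theorem succ_of_exp_eq (hA : A.BlockTriangular id) (hB : B.BlockTriangular id)
    (hexp : NormedSpace.exp A = NormedSpace.exp B) (h : EqBelowSuperdiag k A B) :
    EqBelowSuperdiag (k + 1) A B := by
  refine h.succ fun i j hij => ?_
  rcases k.eq_zero_or_pos with rfl | hk
  · obtain rfl : j = i := by omega
    apply Real.exp_injective
    rw [← hA.exp_apply_self, ← hB.exp_apply_self, hexp]
  · have key := h.exp_apply_sub_eq hA hB hk hij
    rw [hexp, h.apply_self hk i, h.apply_self hk j, sub_right_inj] at key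
    exact mul_right_cancel₀ (Real.dslope_exp_ne_zero _ _) key

end EqBelowSuperdiag

theorem exists_exp_eqBelowSuperdiag_succ {n k : ℕ} {M X : Matrix (Fin n) (Fin n) ℝ}
    (hX : X.BlockTriangular id) (hk : 0 < k) (h : EqBelowSuperdiag k (NormedSpace.exp X) M) :
    ∃ Y : Matrix (Fin n) (Fin n) ℝ, Y.BlockTriangular id ∧
      EqBelowSuperdiag (k + 1) (NormedSpace.exp Y) M := by
  set d : Fin n → Fin n → ℝ := fun p q => dslope Real.exp (X p p) (X q q)
  set Y := X + of fun (p q : Fin n) =>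
    if (q : ℕ) = p + k then (M p q - NormedSpace.exp X p q) / d p q else 0
  have hY : Y.BlockTriangular id := hX.add fun p q hqp => if_neg (by simp at hqp; omega)
  have hYX : EqBelowSuperdiag k Y X := fun p q hpq => by simp [Y, hpq.ne]
  refine ⟨Y, hY, ((hYX.exp hY hX).trans h).succ fun i j hij => ?_⟩
  have key := hYX.exp_apply_sub_eq hY hX hk hij
  rw [hYX.apply_self hk i, hYX.apply_self hk j] at key
  have hYij : Y i j = X i j + (M i j - NormedSpace.exp X i j) / d i j := by simp [Y, hij]
  rw [hYij, add_mul, div_mul_cancel₀ _ (Real.dslope_exp_ne_zero _ _)] at key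
  linarith

theorem exists_exp_eqBelowSuperdiag {n : ℕ} {M : Matrix (Fin n) (Fin n) ℝ}
    (hM : M.BlockTriangular id) (hMpos : ∀ i, 0 < M i i) {k : ℕ} (hk : 0 < k) :
    ∃ X : Matrix (Fin n) (Fin n) ℝ, X.BlockTriangular id ∧
      EqBelowSuperdiag k (NormedSpace.exp X) M := by
  induction k, hk using Nat.le_induction with
  | base =>
    have hX : (diagonal fun i => Real.log (M i i)).BlockTriangular id := blockTriangular_diagonal _
    refine ⟨_, hX, (eqBelowSuperdiag_zero hX.exp hM).succ fun i j hij => ?_⟩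
    obtain rfl : j = i := by omega
    rw [hX.exp_apply_self, diagonal_apply_eq, Real.exp_log (hMpos j)]
  | succ k hk ih =>
    obtain ⟨X, hX, hXM⟩ := ih
    exact exists_exp_eqBelowSuperdiag_succ hX hk hXM

end Exponential

end Matrix

/-- the matrix exponential maps the set `t_n(ℝ)` of upper triangular real
matrices bijectively onto the set `T_n^+(ℝ)` of upper triangular real matrices with
positive diagonal entries. -/
theorem stmt_6 (n : ℕ) :
    Set.BijOn (NormedSpace.exp)
      {A : Matrix (Fin n) (Fin n) ℝ | A.BlockTriangular id}
      {B : Matrix (Fin n) (Fin n) ℝ | B.BlockTriangular id ∧ ∀ i, 0 < B i i} := by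
  refine ⟨fun A hA => ⟨hA.exp, fun i => ?_⟩, fun A hA B hB hexp => ?_, fun M ⟨hM, hMpos⟩ => ?_⟩
  · rw [BlockTriangular.exp_apply_self hA]
    exact Real.exp_pos _
  · have hbands (k : ℕ) : EqBelowSuperdiag k A B := by
      induction k with
      | zero => exact eqBelowSuperdiag_zero hA hB
      | succ k ih => exact ih.succ_of_exp_eq hA hB hexp
    exact (hbands n).eq le_rfl
  · obtain ⟨X, hX, hXM⟩ := exists_exp_eqBelowSuperdiag hM hMpos n.succ_pos
    exact ⟨X, hX, hXM.eq n.le_succ⟩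
end

section
/- Let G be the semidirect product ℝ² ⋊_γ ℝ, where for x ∈ ℝ the automorphism γ(x) of the additive group ℝ² is the rotation by angle 2πx, i.e. γ(x)(u,v) = (u cos(2πx) + v sin(2πx), −u sin(2πx) + v cos(2πx)); the group operation on G is (a, x)·(b, y) = (a + γ(x)(b), x + y). Then G is a solvable group and G is torsion-free: the only element of G of finite order is the identity. -/
/-!
The projection `(a, x) ↦ x` is a homomorphism onto `ℝ`, and on its kernel `x = 0` the rotation
`γ(0)` is the identity, so the kernel is the additive group `ℝ²`. Thus `G` is an extension of
the abelian group `ℝ` by the abelian group `ℝ²`, hence solvable; and as both `ℝ²` and `ℝ` are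
torsion-free, so is `G`: an element of finite order maps to an element of finite order of `ℝ`,
so it lies in the kernel, where it has finite order in `ℝ²`. (`G` is not `IsMulTorsionFree`,
since roots need not be unique: `(a, 1/2)² = (0, 1)` for every `a`.)
-/

open Function

section Extension

variable {G H K : Type*} [Group G] [Group H] [Group K] {π : G →* H} {j : π.ker →* K}

theorem isSolvable_of_injective_ker (hj : Injective j) [Group.IsSolvable H] [Group.IsSolvable K] :
    Group.IsSolvable G :=
  have : Group.IsSolvable π.ker := Group.isSolvable_of_isSolvable_injective hj
  Group.isSolvable_of_ker_le_range π.ker.subtype π (by rw [Subgroup.range_subtype])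

theorem not_isOfFinOrder_of_injective_ker (hj : Injective j) [IsMulTorsionFree H]
    [IsMulTorsionFree K] {g : G} (hg : g ≠ 1) : ¬IsOfFinOrder g := by
  intro hfin
  have hker : g ∈ π.ker := (π.isOfFinOrder hfin).eq_one'
  have hfin' : IsOfFinOrder (⟨g, hker⟩ : π.ker) :=
    (Subtype.val_injective.isOfFinOrder_iff (f := π.ker.subtype)).mp hfin
  have hj1 : j ⟨g, hker⟩ = j 1 := by rw [(j.isOfFinOrder hfin').eq_one', map_one]
  exact hg (congrArg Subtype.val (hj hj1))

end Extension

section ProductCoordinates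

variable {G V A : Type*} [Group G] [AddCommGroup A] (e : G ≃ V × A)
  (hsnd : ∀ g h : G, (e (g * h)).2 = (e g).2 + (e h).2)

def sndHom : G →* Multiplicative A :=
  MonoidHom.mk' (fun g ↦ Multiplicative.ofAdd (e g).2) fun g h ↦ by
    simp only [hsnd, ofAdd_add]

theorem mem_ker_sndHom {g : G} : g ∈ (sndHom e hsnd).ker ↔ (e g).2 = 0 := by
  rw [MonoidHom.mem_ker, ← toAdd_eq_zero]
  rfl

variable [AddCommGroup V] (hfst : ∀ g h : G, (e g).2 = 0 → (e (g * h)).1 = (e g).1 + (e h).1)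

def fstKerHom : (sndHom e hsnd).ker →* Multiplicative V :=
  MonoidHom.mk' (fun g ↦ Multiplicative.ofAdd (e g).1) fun g h ↦ by
    simp only [Subgroup.coe_mul, hfst g h ((mem_ker_sndHom e hsnd).mp g.2), ofAdd_add]

theorem fstKerHom_injective : Injective (fstKerHom e hsnd hfst) := by
  intro g h hgh
  have hfst_eq : (e g).1 = (e h).1 := Multiplicative.ofAdd.injective hgh
  have hsnd_eq : (e g).2 = (e h).2 := by
    rw [(mem_ker_sndHom e hsnd).mp g.2, (mem_ker_sndHom e hsnd).mp h.2]
  exact Subtype.ext (e.injective (Prod.ext hfst_eq hsnd_eq))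

end ProductCoordinates

/-- the semidirect product `ℝ² ⋊_γ ℝ`, where `γ(x)` is rotation by angle
`2πx` — i.e. any group `G` whose multiplication, transported along a bijection with
`(ℝ × ℝ) × ℝ`, is `(a, x)·(b, y) = (a + γ(x)(b), x + y)` with
`γ(x)(u, v) = (u cos 2πx + v sin 2πx, −u sin 2πx + v cos 2πx)` — is solvable and
torsion-free. -/
theorem stmt_14 (G : Type*) [Group G] (e : G ≃ (ℝ × ℝ) × ℝ)
    (hmul : ∀ g h : G,
      e (g * h) =
        (((e g).1.1 + ((e h).1.1 * Real.cos (2 * Real.pi * (e g).2)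
              + (e h).1.2 * Real.sin (2 * Real.pi * (e g).2)),
          (e g).1.2 + (-(e h).1.1 * Real.sin (2 * Real.pi * (e g).2)
              + (e h).1.2 * Real.cos (2 * Real.pi * (e g).2))),
         (e g).2 + (e h).2)) :
    IsSolvable G ∧ (∀ g : G, g ≠ 1 → ¬IsOfFinOrder g) := by
  have hsnd : ∀ g h : G, (e (g * h)).2 = (e g).2 + (e h).2 := fun g h ↦ by rw [hmul]
  have hfst : ∀ g h : G, (e g).2 = 0 → (e (g * h)).1 = (e g).1 + (e h).1 := fun g h hg ↦ by
    rw [hmul, hg, mul_zero, Real.cos_zero, Real.sin_zero]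
    ext <;> simp
  have hj := fstKerHom_injective e hsnd hfst
  exact ⟨isSolvable_of_injective_ker hj, fun g hg ↦ not_isOfFinOrder_of_injective_ker hj hg⟩
end
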